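/- arXiv:1803.08166 — 2 statements merged into one kernel-verified Lean document; each statement's English description precedes it below -/
import Mathlib

section
/- For every y > 0 one has θ y (e^{θ y} + e^{−θ y}) − (e^{θ y} − e^{−θ y}) > 0; moreover ξ is differentiable on (0,∞) with ξ′(y) = (2 k₂/θ) · ((e^{θ y} + e^{−θ y} − 2)/(e^{θ y} − e^{−θ y})²) · (θ y (e^{θ y} + e^{−θ y}) − (e^{θ y} − e^{−θ y})) > 0, so that ξ is strictly increasing on (0,∞). -/
/-!
With `t = θ y` one has `e^t + e^{-t} = 2 cosh t` and `e^t - e^{-t} = 2 sinh t`, so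
`ξ(y) = k₂ y² - (2k₂/θ) y (cosh t - 1) / sinh t`, and the quotient rule gives the derivative.
Its sign is that of `t cosh t - sinh t`, which vanishes at `0` and has derivative `t sinh t > 0`.
-/

/-- `ξ(y) = k₂ y² − (2k₂/θ) ((e^{θy}+e^{−θy}−2)/(e^{θy}−e^{−θy})) y`. -/
noncomputable def xiFun (θ k₂ y : ℝ) : ℝ :=
  k₂ * y ^ 2 -
    (2 * k₂ / θ) *
      ((Real.exp (θ * y) + Real.exp (-(θ * y)) - 2) /
        (Real.exp (θ * y) - Real.exp (-(θ * y)))) * y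

open Real

theorem Real.sinh_lt_mul_cosh {t : ℝ} (ht : 0 < t) : sinh t < t * cosh t := by
  have hderiv : ∀ x : ℝ, HasDerivAt (fun x => x * cosh x - sinh x) (x * sinh x) x := fun x => by
    refine (((hasDerivAt_id' x).mul (hasDerivAt_cosh x)).sub (hasDerivAt_sinh x)).congr_deriv ?_
    ring
  have hmono : StrictMonoOn (fun x => x * cosh x - sinh x) (Set.Ici 0) :=
    strictMonoOn_of_hasDerivWithinAt_pos (convex_Ici 0)
      (fun x _ => (hderiv x).continuousAt.continuousWithinAt)
      (fun x _ => (hderiv x).hasDerivWithinAt)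
      (fun x hx => by rw [interior_Ici] at hx; exact mul_pos hx (sinh_pos_iff.2 hx))
  simpa using hmono Set.self_mem_Ici ht.le ht

lemma xiFun_eq_cosh_sinh (θ k₂ : ℝ) :
    xiFun θ k₂ = fun y => k₂ * y ^ 2 - 2 * k₂ / θ * ((cosh (θ * y) - 1) / sinh (θ * y)) * y := by
  funext y
  rw [xiFun, cosh_eq, sinh_eq, div_sub_one two_ne_zero, div_div_div_cancel_right₀ two_ne_zero]

lemma hasDerivAt_xiFun {θ y : ℝ} (k₂ : ℝ) (hθ : θ ≠ 0) (hy : y ≠ 0) :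
    HasDerivAt (xiFun θ k₂)
      (2 * k₂ / θ * ((cosh (θ * y) - 1) / sinh (θ * y) ^ 2) *
        (θ * y * cosh (θ * y) - sinh (θ * y))) y := by
  have hs : sinh (θ * y) ≠ 0 := sinh_ne_zero.2 (mul_ne_zero hθ hy)
  have hθy : HasDerivAt (fun y => θ * y) θ y := hasDerivAt_const_mul θ
  have hq := (hθy.cosh.sub_const 1).div hθy.sinh hs
  have h := ((hasDerivAt_pow 2 y).const_mul k₂).sub
    ((hq.const_mul (2 * k₂ / θ)).mul (hasDerivAt_id' y))
  rw [xiFun_eq_cosh_sinh]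
  refine h.congr_deriv ?_
  simp only [Pi.div_apply]
  field_simp
  ring

theorem stmt_7 (θ k₂ : ℝ) (hθ : 0 < θ) (hk : 0 < k₂) :
    (∀ y : ℝ, 0 < y →
      0 < θ * y * (Real.exp (θ * y) + Real.exp (-(θ * y))) -
          (Real.exp (θ * y) - Real.exp (-(θ * y))) ∧
      HasDerivAt (xiFun θ k₂)
        ((2 * k₂ / θ) *
          ((Real.exp (θ * y) + Real.exp (-(θ * y)) - 2) /
            (Real.exp (θ * y) - Real.exp (-(θ * y))) ^ 2) *
          (θ * y * (Real.exp (θ * y) + Real.exp (-(θ * y))) -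
            (Real.exp (θ * y) - Real.exp (-(θ * y))))) y ∧
      0 < (2 * k₂ / θ) *
          ((Real.exp (θ * y) + Real.exp (-(θ * y)) - 2) /
            (Real.exp (θ * y) - Real.exp (-(θ * y))) ^ 2) *
          (θ * y * (Real.exp (θ * y) + Real.exp (-(θ * y))) -
            (Real.exp (θ * y) - Real.exp (-(θ * y))))) ∧
    StrictMonoOn (xiFun θ k₂) (Set.Ioi 0) := by
  have hcosh (t : ℝ) : exp t + exp (-t) = 2 * cosh t := by rw [cosh_eq]; ring
  have hsinh (t : ℝ) : exp t - exp (-t) = 2 * sinh t := by rw [sinh_eq]; ring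
  have hderiv_pos (y : ℝ) (hy : 0 < y) : 0 < 2 * k₂ / θ * ((cosh (θ * y) - 1) / sinh (θ * y) ^ 2) *
      (θ * y * cosh (θ * y) - sinh (θ * y)) := by
    have hθy := mul_pos hθ hy
    have hcosh_gt := one_lt_cosh.2 hθy.ne'
    have hsinh_pos := sinh_pos_iff.2 hθy
    have hkey := sinh_lt_mul_cosh hθy
    exact mul_pos (mul_pos (by positivity) (div_pos (by linarith) (by positivity))) (by linarith)
  refine ⟨fun y hy => ?_, ?_⟩
  · simp only [hcosh, hsinh]
    rw [show ∀ c s : ℝ, 2 * k₂ / θ * ((2 * c - 2) / (2 * s) ^ 2) * (θ * y * (2 * c) - 2 * s) =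
      2 * k₂ / θ * ((c - 1) / s ^ 2) * (θ * y * c - s) by intros; ring]
    exact ⟨by linarith [sinh_lt_mul_cosh (mul_pos hθ hy)], hasDerivAt_xiFun k₂ hθ.ne' hy.ne',
      hderiv_pos y hy⟩
  · refine strictMonoOn_of_deriv_pos (convex_Ioi 0)
      (fun y hy => (hasDerivAt_xiFun k₂ hθ.ne' (ne_of_gt hy)).continuousAt.continuousWithinAt)
      fun y hy => ?_
    rw [interior_Ioi] at hy
    rw [(hasDerivAt_xiFun k₂ hθ.ne' hy.ne').deriv]
    exact hderiv_pos y hy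
end

section
/- For every c > 0 there exists a unique ȳ(c) > 0 with ξ(ȳ(c)) = c; moreover lim_{c → 0⁺} ȳ(c) = 0 and lim_{c → 0⁺} ȳ(c)/c^{1/4} = (12/(k₂ θ²))^{1/4}. -/
/-! Rewriting the exponentials, `ξ(y) = k₂ y (y - (2/θ) tanh(θy/2))`. Since `t - tanh t` has
derivative `tanh² t`, it is strictly increasing on `[0, ∞)`; so is `ξ`, which is continuous,
vanishes at `0` and tends to `∞`. Hence `ξ` is a bijection of `(0, ∞)` whose inverse `ȳ` tends
to `0` at `0⁺`. By L'Hôpital `t - tanh t ~ t³/3`, hence `ξ(y) ~ k₂θ²y⁴/12` and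
`ȳ(c)⁴ / c → 12/(k₂θ²)`. -/

open Real Filter Set Topology

namespace Real

theorem hasDerivAt_tanh (x : ℝ) : HasDerivAt tanh (1 - tanh x ^ 2) x := by
  have hc : cosh x ≠ 0 := (cosh_pos x).ne'
  rw [show tanh = sinh / cosh from funext tanh_eq_sinh_div_cosh]
  refine ((hasDerivAt_sinh x).div (hasDerivAt_cosh x) hc).congr_deriv ?_
  simp only [Pi.div_apply]
  field_simp

@[fun_prop]
theorem continuous_tanh : Continuous tanh :=
  continuous_iff_continuousAt.2 fun x => (hasDerivAt_tanh x).continuousAt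

theorem tanh_pos {x : ℝ} (hx : 0 < x) : 0 < tanh x := by
  rw [tanh_eq_sinh_div_cosh]
  exact div_pos (sinh_pos_iff.2 hx) (cosh_pos x)

theorem tanh_eq_exp_two_mul (x : ℝ) :
    tanh x = (exp (2 * x) + exp (-(2 * x)) - 2) / (exp (2 * x) - exp (-(2 * x))) := by
  rcases eq_or_ne x 0 with rfl | hx
  · simp -- the right side is `0 / 0 = 0`
  have hs : sinh x ≠ 0 := sinh_ne_zero.2 hx
  have hc : cosh x ≠ 0 := (cosh_pos x).ne'
  have h2x : exp (2 * x) = exp x * exp x := by rw [← exp_add, two_mul]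
  have h2x' : exp (-(2 * x)) = exp (-x) * exp (-x) := by rw [← exp_add, two_mul, neg_add]
  have hnum : exp (2 * x) + exp (-(2 * x)) - 2 = 4 * sinh x ^ 2 := by
    rw [sinh_eq, h2x, h2x', exp_neg]; field_simp; ring
  have hden : exp (2 * x) - exp (-(2 * x)) = 4 * sinh x * cosh x := by
    rw [sinh_eq, cosh_eq, h2x, h2x', exp_neg]; ring
  rw [hnum, hden, tanh_eq_sinh_div_cosh]
  field_simp

theorem hasDerivAt_sub_tanh (t : ℝ) : HasDerivAt (fun t => t - tanh t) (tanh t ^ 2) t :=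
  ((hasDerivAt_id' t).sub (hasDerivAt_tanh t)).congr_deriv (by ring)

theorem strictMonoOn_sub_tanh : StrictMonoOn (fun t => t - tanh t) (Ici 0) := by
  refine strictMonoOn_of_hasDerivWithinAt_pos (convex_Ici 0) (by fun_prop)
    (fun t _ => (hasDerivAt_sub_tanh t).hasDerivWithinAt) ?_
  intro t ht
  rw [interior_Ici, mem_Ioi] at ht
  simpa using pow_pos (tanh_pos ht) 2

theorem sub_tanh_nonneg {t : ℝ} (ht : 0 ≤ t) : 0 ≤ t - tanh t := by
  simpa using strictMonoOn_sub_tanh.monotoneOn self_mem_Ici (mem_Ici.2 ht) ht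

theorem tendsto_tanh_div_self : Tendsto (fun t => tanh t / t) (𝓝[>] 0) (𝓝 1) := by
  simpa [div_eq_inv_mul] using (hasDerivAt_tanh 0).tendsto_slope_zero_right

theorem tendsto_sub_tanh_div_pow_three :
    Tendsto (fun t => (t - tanh t) / t ^ 3) (𝓝[>] 0) (𝓝 (1 / 3)) := by
  have hratio : Tendsto (fun t => (tanh t / t) ^ 2 / 3) (𝓝[>] 0) (𝓝 (1 / 3)) := by
    simpa using (tendsto_tanh_div_self.pow 2).div_const 3
  refine HasDerivAt.lhopital_zero_nhdsGT (f' := fun t => tanh t ^ 2) (g' := fun t => 3 * t ^ 2)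
    (.of_forall hasDerivAt_sub_tanh)
    (.of_forall fun t => by simpa using hasDerivAt_pow 3 t) ?_ ?_ ?_ ?_
  · filter_upwards [self_mem_nhdsWithin] with t (ht : 0 < t)
    positivity
  · simpa using ((by fun_prop : Continuous fun t => t - tanh t).tendsto 0).mono_left
      nhdsWithin_le_nhds
  · simpa using ((continuous_pow 3).tendsto (0 : ℝ)).mono_left nhdsWithin_le_nhds
  · refine hratio.congr' ?_
    filter_upwards [self_mem_nhdsWithin] with t (ht : 0 < t)
    field_simp

end Real

theorem existsUnique_pos_eq_of_strictMonoOn {f : ℝ → ℝ} (hcont : ContinuousOn f (Ici 0))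
    (hmono : StrictMonoOn f (Ici 0)) (hzero : f 0 = 0) (htop : Tendsto f atTop atTop)
    {c : ℝ} (hc : 0 < c) : ∃! y, 0 < y ∧ f y = c := by
  obtain ⟨b, hb⟩ := ((htop.eventually_ge_atTop c).and (eventually_ge_atTop 0)).exists
  obtain ⟨y, hy, hfy⟩ := intermediate_value_Icc hb.2 (hcont.mono Icc_subset_Ici_self)
    ⟨by rw [hzero]; exact hc.le, hb.1⟩
  have hy0 : 0 < y := hy.1.lt_of_ne (by rintro rfl; rw [hzero] at hfy; exact hc.ne' hfy.symm)
  exact ⟨y, ⟨hy0, hfy⟩, fun z hz => hmono.injOn (mem_Ici.2 hz.1.le) (mem_Ici.2 hy0.le)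
    (hz.2.trans hfy.symm)⟩

theorem tendsto_nhdsGT_zero_of_rightInvOn {f g : ℝ → ℝ} (hmono : StrictMonoOn f (Ici 0))
    (hzero : f 0 = 0) (hg : ∀ c, 0 < c → 0 < g c ∧ f (g c) = c) :
    Tendsto g (𝓝[>] 0) (𝓝[>] 0) := by
  refine tendsto_nhdsWithin_iff.2 ⟨tendsto_order.2 ⟨fun a ha => ?_, fun ε hε => ?_⟩, ?_⟩
  · filter_upwards [self_mem_nhdsWithin] with c (hc : 0 < c)
    exact ha.trans (hg c hc).1
  · have hfε : 0 < f ε := by simpa [hzero] using hmono self_mem_Ici (mem_Ici.2 hε.le) hε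
    filter_upwards [self_mem_nhdsWithin, nhdsWithin_le_nhds (eventually_lt_nhds hfε)]
      with c (hc : 0 < c) hcε
    obtain ⟨hgc, hfgc⟩ := hg c hc
    exact (hmono.lt_iff_lt (mem_Ici.2 hgc.le) (mem_Ici.2 hε.le)).1 (by rwa [hfgc])
  · filter_upwards [self_mem_nhdsWithin] with c (hc : 0 < c)
    exact (hg c hc).1

section xiFun

variable {θ k₂ : ℝ}

theorem xiFun_eq (y : ℝ) : xiFun θ k₂ y = k₂ * y * (y - 2 / θ * tanh (θ * y / 2)) := by
  rw [xiFun, tanh_eq_exp_two_mul, mul_div_cancel₀ _ two_ne_zero]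
  ring

theorem continuous_xiFun : Continuous (xiFun θ k₂) := by
  rw [funext xiFun_eq]
  fun_prop

theorem xiFun_eq_mul_sub_tanh (hθ : 0 < θ) (y : ℝ) :
    xiFun θ k₂ y = 2 / θ * k₂ * (y * (θ * y / 2 - tanh (θ * y / 2))) := by
  rw [xiFun_eq]
  field_simp

theorem strictMonoOn_xiFun (hθ : 0 < θ) (hk : 0 < k₂) : StrictMonoOn (xiFun θ k₂) (Ici 0) := by
  intro a (ha : 0 ≤ a) b (hb : 0 ≤ b) hab
  rw [xiFun_eq_mul_sub_tanh hθ, xiFun_eq_mul_sub_tanh hθ]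
  have hrescale : θ * a / 2 < θ * b / 2 := by gcongr
  refine mul_lt_mul_of_pos_left ?_ (by positivity)
  exact mul_lt_mul'' hab (strictMonoOn_sub_tanh (mem_Ici.2 (by positivity))
    (mem_Ici.2 (by positivity)) hrescale) (by positivity) (sub_tanh_nonneg (by positivity))

theorem tendsto_xiFun_atTop (hθ : 0 < θ) (hk : 0 < k₂) : Tendsto (xiFun θ k₂) atTop atTop := by
  have hlower : Tendsto (fun y => k₂ * y * (y - 2 / θ)) atTop atTop :=
    (tendsto_id.const_mul_atTop hk).atTop_mul_atTop₀ (tendsto_atTop_add_const_right _ _ tendsto_id)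
  refine tendsto_atTop_mono' _ ?_ hlower
  filter_upwards [eventually_ge_atTop 0] with y hy
  rw [xiFun_eq]
  gcongr
  exact mul_le_of_le_one_right (by positivity) (tanh_lt_one _).le

theorem tendsto_xiFun_div_pow_four (hθ : 0 < θ) :
    Tendsto (fun y => xiFun θ k₂ y / y ^ 4) (𝓝[>] 0) (𝓝 (k₂ * θ ^ 2 / 12)) := by
  have hrescale : Tendsto (fun y => θ * y / 2) (𝓝[>] 0) (𝓝[>] 0) := by
    refine tendsto_nhdsWithin_iff.2 ⟨?_, ?_⟩
    · simpa using ((by fun_prop : Continuous fun y => θ * y / 2).tendsto 0).mono_left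
        nhdsWithin_le_nhds
    · filter_upwards [self_mem_nhdsWithin] with y (hy : 0 < y)
      exact mem_Ioi.2 (by positivity)
  have h := (tendsto_sub_tanh_div_pow_three.comp hrescale).const_mul (k₂ * θ ^ 2 / 4)
  rw [show k₂ * θ ^ 2 / 4 * (1 / 3) = k₂ * θ ^ 2 / 12 by ring] at h
  refine h.congr' ?_
  filter_upwards [self_mem_nhdsWithin] with y (hy : 0 < y)
  rw [Function.comp_apply, xiFun_eq_mul_sub_tanh hθ]
  field_simp
  ring

end xiFun

theorem stmt_8 (θ k₂ : ℝ) (hθ : 0 < θ) (hk : 0 < k₂) :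
    (∀ c : ℝ, 0 < c → ∃! y : ℝ, 0 < y ∧ xiFun θ k₂ y = c) ∧
    ∀ ybar : ℝ → ℝ, (∀ c : ℝ, 0 < c → 0 < ybar c ∧ xiFun θ k₂ (ybar c) = c) →
      Filter.Tendsto ybar (nhdsWithin 0 (Set.Ioi 0)) (nhds 0) ∧
      Filter.Tendsto (fun c => ybar c / c ^ ((1 : ℝ) / 4)) (nhdsWithin 0 (Set.Ioi 0))
        (nhds ((12 / (k₂ * θ ^ 2)) ^ ((1 : ℝ) / 4))) := by
  have hmono := strictMonoOn_xiFun hθ hk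
  have hzero : xiFun θ k₂ 0 = 0 := by simp [xiFun]
  refine ⟨fun c hc => existsUnique_pos_eq_of_strictMonoOn continuous_xiFun.continuousOn
    hmono hzero (tendsto_xiFun_atTop hθ hk) hc, fun ybar hybar => ?_⟩
  have hy := tendsto_nhdsGT_zero_of_rightInvOn hmono hzero hybar
  refine ⟨hy.mono_right nhdsWithin_le_nhds, ?_⟩
  have hquot : Tendsto (fun c => ybar c ^ 4 / c) (𝓝[>] 0) (𝓝 (12 / (k₂ * θ ^ 2))) := by
    have h := ((tendsto_xiFun_div_pow_four (k₂ := k₂) hθ).comp hy).inv₀ (by positivity)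
    rw [inv_div] at h
    refine h.congr' ?_
    filter_upwards [self_mem_nhdsWithin] with c (hc : 0 < c)
    rw [Function.comp_apply, (hybar c hc).2, inv_div]
  refine (hquot.rpow_const (.inr (by norm_num))).congr' ?_
  filter_upwards [self_mem_nhdsWithin] with c (hc : 0 < c)
  rw [Real.div_rpow (by positivity [(hybar c hc).1]) hc.le, one_div,
    ← Nat.cast_ofNat (R := ℝ) (n := 4), Real.pow_rpow_inv_natCast (hybar c hc).1.le (by norm_num)]
end
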